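/- Let π₁ ∈ S_n, let 1 ≤ k ≤ n−1, and suppose π₁ is constructed from π₂' ∈ S_k and π₂'' ∈ S_{n−k} by π₁(j) = π₂'(j) + (n−k) for j ≤ k and π₁(j) = π₂''(j−k) for j > k. If π₂' and π₂'' are both 132-avoiding, then π₁ is 132-avoiding. -/
import Mathlib


/-- `σ` contains the pattern 132. -/
def Contains132 {n : ℕ} (σ : Equiv.Perm (Fin n)) : Prop :=
  ∃ i₁ i₂ i₃ : Fin n, i₁ < i₂ ∧ i₂ < i₃ ∧ σ i₁ < σ i₃ ∧ σ i₃ < σ i₂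

/-- The skew sum: `π₁` acts as `π'` (shifted up by `n - k`) on the first `k`
positions and as `π''` on the last `n - k` positions. -/
theorem stmt_13 (n k : ℕ) (hk1 : 1 ≤ k) (hk2 : k ≤ n - 1) (hn : 1 ≤ n)
    (π' : Equiv.Perm (Fin k)) (π'' : Equiv.Perm (Fin (n - k)))
    (π₁ : Equiv.Perm (Fin n))
    (htop : ∀ j : Fin n, ∀ h : (j : ℕ) < k,
      (π₁ j : ℕ) = (π' ⟨(j : ℕ), h⟩ : ℕ) + (n - k))
    (hbot : ∀ j : Fin n, ∀ h : k ≤ (j : ℕ),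
      (π₁ j : ℕ) = (π'' ⟨(j : ℕ) - k, by omega⟩ : ℕ))
    (h' : ¬ Contains132 π') (h'' : ¬ Contains132 π'') :
    ¬ Contains132 π₁ := by
  rintro ⟨i₁, i₂, i₃, h12, h23, ha, hb⟩
  have h12' : (i₁ : ℕ) < i₂ := h12
  have h23' : (i₂ : ℕ) < i₃ := h23
  have ha' : (π₁ i₁ : ℕ) < π₁ i₃ := ha
  have hb' : (π₁ i₃ : ℕ) < π₁ i₂ := hb
  by_cases hc1 : (i₁ : ℕ) < k
  · by_cases hc3 : (i₃ : ℕ) < k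
    · -- all in the top block
      have hc2 : (i₂ : ℕ) < k := by omega
      apply h'
      exact ⟨⟨i₁, hc1⟩, ⟨i₂, hc2⟩, ⟨i₃, hc3⟩, h12', h23', by
        have e1 := htop i₁ hc1; have e3 := htop i₃ hc3
        exact Fin.lt_def.mpr (by omega), by
        have e2 := htop i₂ (by omega); have e3 := htop i₃ hc3
        exact Fin.lt_def.mpr (by omega)⟩
    · -- i₁ top, i₃ bottom: impossible since π₁ i₁ ≥ n-k > π₁ i₃
      have e1 := htop i₁ hc1
      have e3 := hbot i₃ (by omega)
      have : (π'' ⟨(i₃ : ℕ) - k, by omega⟩ : ℕ) < n - k := (π'' _).isLt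
      omega
  · -- all in the bottom block
    have hc2 : k ≤ (i₂ : ℕ) := by omega
    have hc3 : k ≤ (i₃ : ℕ) := by omega
    apply h''
    refine ⟨⟨(i₁ : ℕ) - k, by omega⟩, ⟨(i₂ : ℕ) - k, by omega⟩,
      ⟨(i₃ : ℕ) - k, by omega⟩, by simp [Fin.lt_def]; omega,
      by simp [Fin.lt_def]; omega, ?_, ?_⟩
    · have e1 := hbot i₁ (by omega); have e3 := hbot i₃ hc3
      exact Fin.lt_def.mpr (by omega)
    · have e2 := hbot i₂ hc2; have e3 := hbot i₃ hc3
      exact Fin.lt_def.mpr (by omega)
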